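/- Let q ∈ ℂ^×, V = ℂ², n ≥ 3, and let E be the endomorphism of V⊗V whose matrix in the basis e₁⊗e₁, e₁⊗e₂, e₂⊗e₁, e₂⊗e₂ has (2,2) entry −q⁻¹, (2,3) entry q, (3,2) entry q⁻¹, (3,3) entry −q, and zeros elsewhere. Let E_k denote the operator on V^{⊗n} acting by E on tensor factors k and k+1 and by identity elsewhere. Then E_k E_{k+1} E_k = E_k and E_{k+1} E_k E_{k+1} = E_{k+1} for 1 ≤ k ≤ n−2, and E_i E_j = E_j E_i whenever |i−j| > 1. -/

import Mathlib

open Matrix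

/-- The Temperley–Lieb generator `E` as an endomorphism of `ℂ² ⊗ ℂ²` in the basis
`e₁⊗e₁, e₁⊗e₂, e₂⊗e₁, e₂⊗e₂`. -/
noncomputable def TLE (q : ℂ) : Matrix (Fin 2 × Fin 2) (Fin 2 × Fin 2) ℂ :=
  Matrix.of fun p r =>
    if p = (0, 1) ∧ r = (0, 1) then -q⁻¹
    else if p = (0, 1) ∧ r = (1, 0) then q
    else if p = (1, 0) ∧ r = (0, 1) then q⁻¹
    else if p = (1, 0) ∧ r = (1, 0) then -q
    else 0

/-- `E_k` on `V^{⊗n}` (`V = ℂ²`, factors indexed `0,…,n−1`): acts by `E` on the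
`k`-th and `(k+1)`-th tensor factors and by the identity elsewhere. -/
noncomputable def Ek (q : ℂ) (n k : ℕ) (hk : k + 1 < n) :
    Matrix (Fin n → Fin 2) (Fin n → Fin 2) ℂ :=
  Matrix.of fun f g =>
    TLE q (f ⟨k, by omega⟩, f ⟨k + 1, hk⟩) (g ⟨k, by omega⟩, g ⟨k + 1, hk⟩) *
      ∏ i : Fin n, if i.val = k ∨ i.val = k + 1 then 1 else (if f i = g i then 1 else 0)

/-! An operator acting on a window of tensor factors is determined by a matrix on the window:
operators on the same window multiply through their window matrices, an operator on a
subwindow is itself an operator on the larger window, and operators on disjoint windows commute.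
`E_k` and `E_{k+1}` both act on the three factors `k, k+1, k+2`, so the relations
`E_k E_{k+1} E_k = E_k` and `E_{k+1} E_k E_{k+1} = E_{k+1}` reduce to `n = 3`, a finite check
that needs `q q⁻¹ = 1`. -/

section onSites

variable {ι κ κ' σ R : Type*} [CommSemiring R]

open Classical in
/-- `ι → σ` indexes the product basis of `⨂ i : ι, R^σ`; `onSites e A` acts by `A` on the
tensor factors `e j` and by the identity on the others. -/
noncomputable def onSites (e : κ ↪ ι) (A : Matrix (κ → σ) (κ → σ) R) :
    Matrix (ι → σ) (ι → σ) R :=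
  of fun f g => A (f ∘ e) (g ∘ e) * if Set.EqOn f g (Set.range e)ᶜ then 1 else 0

theorem Function.extend_comp_self_of_eqOn {e : κ → ι} (he : e.Injective) {f h : ι → σ}
    (hfh : Set.EqOn h f (Set.range e)ᶜ) : Function.extend e (h ∘ e) f = h := by
  funext i
  by_cases hi : i ∈ Set.range e
  · obtain ⟨j, rfl⟩ := hi
    exact he.extend_apply _ _ j
  · rw [Function.extend_apply' _ _ _ (by simpa using hi), hfh hi]

theorem Function.eqOn_extend_compl_range (e : κ → ι) (x : κ → σ) (f : ι → σ) :
    Set.EqOn (Function.extend e x f) f (Set.range e)ᶜ := fun _ hi =>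
  Function.extend_apply' _ _ _ (by simpa using hi)

theorem onSites_trans (e' : κ' ↪ κ) (e : κ ↪ ι) (A : Matrix (κ' → σ) (κ' → σ) R) :
    onSites (e'.trans e) A = onSites e (onSites e' A) := by
  classical
  ext f g
  have hrange : Set.EqOn f g (Set.range (e'.trans e))ᶜ ↔
      Set.EqOn f g (Set.range e)ᶜ ∧ Set.EqOn (f ∘ e) (g ∘ e) (Set.range e')ᶜ := by
    refine ⟨fun h => ⟨fun i hi => h ?_, fun j hj => h ?_⟩, fun ⟨hout, hin⟩ i hi => ?_⟩
    · rintro ⟨j', rfl⟩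
      exact hi ⟨e' j', rfl⟩
    · rintro ⟨j', hj'⟩
      exact hj ⟨j', e.injective hj'⟩
    · by_cases hie : i ∈ Set.range e
      · obtain ⟨j, rfl⟩ := hie
        exact hin fun ⟨j', hj'⟩ => hi ⟨j', by simp [hj']⟩
      · exact hout hie
  simp only [onSites, of_apply, hrange, ite_and, mul_ite, mul_one, mul_zero]
  rfl

variable [Fintype ι] [DecidableEq ι] [Fintype σ]

theorem onSites_mul [Fintype κ] [DecidableEq κ] (e : κ ↪ ι) (A B : Matrix (κ → σ) (κ → σ) R) :
    onSites e A * onSites e B = onSites e (A * B) := by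
  classical
  ext f g
  simp only [onSites, mul_apply, of_apply, Finset.sum_mul]
  symm
  -- the intermediate configurations that contribute agree with `f` off the window
  refine Fintype.sum_of_injective (fun x => Function.extend e x f)
    (fun x y hxy => by simpa [Function.extend_comp e.injective] using congrArg (· ∘ e) hxy) _ _
    ?_ ?_
  · intro h hh
    have : ¬ Set.EqOn f h (Set.range e)ᶜ := fun hfh =>
      hh ⟨h ∘ e, Function.extend_comp_self_of_eqOn e.injective hfh.symm⟩
    simp [this]
  · intro x
    have hx := Function.eqOn_extend_compl_range e x f
    have : Set.EqOn (Function.extend e x f) g (Set.range e)ᶜ ↔ Set.EqOn f g (Set.range e)ᶜ :=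
      ⟨fun h => hx.symm.trans h, fun h => hx.trans h⟩
    simp only [Function.extend_comp e.injective, this, if_pos hx.symm]
    ring

open Classical in
theorem onSites_mul_onSites_apply_of_disjoint {e : κ ↪ ι} {e' : κ' ↪ ι}
    (hd : Disjoint (Set.range e) (Set.range e')) (A : Matrix (κ → σ) (κ → σ) R)
    (B : Matrix (κ' → σ) (κ' → σ) R) (f g : ι → σ) :
    (onSites e A * onSites e' B) f g = A (f ∘ e) (g ∘ e) * B (f ∘ e') (g ∘ e') *
      if Set.EqOn f g (Set.range e ∪ Set.range e')ᶜ then 1 else 0 := by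
  -- the only contributing intermediate configuration is `g` on the first window, `f` elsewhere
  set h₀ := Function.extend e (g ∘ e) f
  have hf₀ : Set.EqOn h₀ f (Set.range e)ᶜ := Function.eqOn_extend_compl_range _ _ _
  rw [mul_apply, Fintype.sum_eq_single h₀]
  · have h₀e : h₀ ∘ e = g ∘ e := Function.extend_comp e.injective _ _
    have h₀e' : h₀ ∘ e' = f ∘ e' := funext fun j => hf₀ (Set.disjoint_right.mp hd ⟨j, rfl⟩)
    have hg₀ : Set.EqOn h₀ g (Set.range e')ᶜ ↔ Set.EqOn f g (Set.range e ∪ Set.range e')ᶜ := by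
      refine ⟨fun h i hi => ?_, fun h i hi => ?_⟩
      · rw [Set.compl_union] at hi
        exact (hf₀ hi.1).symm.trans (h hi.2)
      · by_cases hie : i ∈ Set.range e
        · obtain ⟨j, rfl⟩ := hie
          exact congrFun h₀e j
        · exact (hf₀ hie).trans (h (by simp_all))
    simp only [onSites, of_apply, h₀e, h₀e', hg₀, if_pos hf₀.symm]
    ring
  · intro h hne
    obtain ⟨i, hi⟩ := Function.ne_iff.mp hne
    by_cases hie : i ∈ Set.range e
    · have hi' : h i ≠ g i := by
        obtain ⟨j, rfl⟩ := hie
        simpa [h₀, e.injective.extend_apply] using hi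
      have : ¬ Set.EqOn h g (Set.range e')ᶜ := fun hhg => hi' (hhg (Set.disjoint_left.mp hd hie))
      simp [onSites, this]
    · have : ¬ Set.EqOn f h (Set.range e)ᶜ := fun hfh => hi ((hfh hie).symm.trans (hf₀ hie).symm)
      simp [onSites, this]

theorem onSites_commute_of_disjoint {e : κ ↪ ι} {e' : κ' ↪ ι}
    (hd : Disjoint (Set.range e) (Set.range e')) (A : Matrix (κ → σ) (κ → σ) R)
    (B : Matrix (κ' → σ) (κ' → σ) R) : Commute (onSites e A) (onSites e' B) := by
  ext f g
  rw [onSites_mul_onSites_apply_of_disjoint hd, onSites_mul_onSites_apply_of_disjoint hd.symm,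
    Set.union_comm]
  ring

end onSites

section window

def window (n k m : ℕ) (h : k + m ≤ n) : Fin m ↪ Fin n :=
  ⟨fun j => ⟨k + j, by omega⟩, fun a b hab => Fin.ext (by simpa using hab)⟩

@[simp]
theorem val_window_apply {n k m : ℕ} (h : k + m ≤ n) (j : Fin m) :
    (window n k m h j : ℕ) = k + j :=
  rfl

theorem mem_range_window {n k m : ℕ} (h : k + m ≤ n) (i : Fin n) :
    i ∈ Set.range (window n k m h) ↔ k ≤ i ∧ (i : ℕ) < k + m :=
  ⟨fun ⟨j, hj⟩ => by rw [← hj]; simp, fun ⟨h₁, h₂⟩ => ⟨⟨i - k, by omega⟩, by ext; simp; omega⟩⟩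

theorem window_trans {n k m j l : ℕ} (h₁ : j + l ≤ m) (h₂ : k + m ≤ n) :
    (window m j l h₁).trans (window n k m h₂) = window n (k + j) l (by omega) := by
  ext x
  simp [add_assoc]

theorem disjoint_range_window {n i j : ℕ} (hi : i + 2 ≤ n) (hj : j + 2 ≤ n)
    (hij : i + 1 < j ∨ j + 1 < i) :
    Disjoint (Set.range (window n i 2 hi)) (Set.range (window n j 2 hj)) := by
  rw [Set.disjoint_left]
  intro x hx hx'
  rw [mem_range_window] at hx hx'
  omega

end window

theorem sum_pi_fin_three {σ M : Type*} [Fintype σ] [AddCommMonoid M] (F : (Fin 3 → σ) → M) :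
    ∑ h, F h = ∑ a, ∑ b, ∑ c, F ![a, b, c] := by
  simp only [← (Fin.consEquiv fun _ => σ).sum_comp, Fintype.sum_prod_type, Fintype.sum_unique]
  congr!

noncomputable def tlePi (q : ℂ) : Matrix (Fin 2 → Fin 2) (Fin 2 → Fin 2) ℂ :=
  (TLE q).submatrix (fun x => (x 0, x 1)) (fun x => (x 0, x 1))

theorem Ek_eq_onSites (q : ℂ) (n k : ℕ) (hk : k + 1 < n) :
    Ek q n k hk = onSites (window n k 2 hk) (tlePi q) := by
  classical
  ext f g
  simp only [Ek, onSites, tlePi, of_apply, submatrix_apply]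
  congr 1
  simp only [← ite_or, Finset.prod_boole, Finset.mem_univ, true_implies]
  refine if_congr (forall_congr' fun i => ?_) rfl rfl
  rw [Set.mem_compl_iff, mem_range_window, or_iff_not_imp_left]
  exact imp_congr_left (by omega)

theorem Ek_eq_onSites_Ek_three (q : ℂ) {n k j : ℕ} (hj : j + 2 ≤ 3) (hk : k + 3 ≤ n) :
    Ek q n (k + j) (by omega) = onSites (window n k 3 hk) (Ek q 3 j (by omega)) := by
  rw [Ek_eq_onSites, Ek_eq_onSites, ← onSites_trans, window_trans]

theorem Ek_three_zero_apply (q : ℂ) (f g : Fin 3 → Fin 2) :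
    Ek q 3 0 (by omega) f g = TLE q (f 0, f 1) (g 0, g 1) * if f 2 = g 2 then 1 else 0 := by
  simp [Ek, Fin.prod_univ_three]

theorem Ek_three_one_apply (q : ℂ) (f g : Fin 3 → Fin 2) :
    Ek q 3 1 (by omega) f g = TLE q (f 1, f 2) (g 1, g 2) * if f 0 = g 0 then 1 else 0 := by
  simp [Ek, Fin.prod_univ_three]

theorem Ek_three_temperleyLieb (q : ℂ) (hq : q ≠ 0) :
    Ek q 3 0 (by omega) * Ek q 3 1 (by omega) * Ek q 3 0 (by omega) = Ek q 3 0 (by omega) ∧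
    Ek q 3 1 (by omega) * Ek q 3 0 (by omega) * Ek q 3 1 (by omega) = Ek q 3 1 (by omega) := by
  constructor <;>
  · ext f g
    simp only [mul_apply, sum_pi_fin_three, Ek_three_zero_apply, Ek_three_one_apply, Fin.isValue,
      mul_ite, ite_mul, mul_one, mul_zero, zero_mul, cons_val_zero, cons_val_one, cons_val,
      Fin.sum_univ_two, ↓reduceIte, one_ne_zero, zero_ne_one, add_zero, zero_add]
    generalize f 0 = x₁, f 1 = x₂, f 2 = x₃, g 0 = y₁, g 1 = y₂, g 2 = y₃
    fin_cases x₁ <;> fin_cases x₂ <;> fin_cases x₃ <;> fin_cases y₁ <;> fin_cases y₂ <;>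
      fin_cases y₃ <;> simp [TLE] <;> field_simp

theorem stmt16 (q : ℂ) (hq : q ≠ 0) (n : ℕ) :
    (∀ k (hk : k + 2 < n),
      Ek q n k (by omega) * Ek q n (k + 1) (by omega) * Ek q n k (by omega)
        = Ek q n k (by omega) ∧
      Ek q n (k + 1) (by omega) * Ek q n k (by omega) * Ek q n (k + 1) (by omega)
        = Ek q n (k + 1) (by omega)) ∧
    (∀ i j (hi : i + 1 < n) (hj : j + 1 < n), (i + 1 < j ∨ j + 1 < i) →
      Ek q n i hi * Ek q n j hj = Ek q n j hj * Ek q n i hi) := by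
  refine ⟨fun k hk => ?_, fun i j hi hj hij => ?_⟩
  · have e₀ : Ek q n k _ = onSites (window n k 3 hk) (Ek q 3 0 _) :=
      Ek_eq_onSites_Ek_three q (j := 0) (by omega) hk
    have e₁ : Ek q n (k + 1) _ = onSites (window n k 3 hk) (Ek q 3 1 _) :=
      Ek_eq_onSites_Ek_three q (j := 1) (by omega) hk
    obtain ⟨h₀₁₀, h₁₀₁⟩ := Ek_three_temperleyLieb q hq
    simp only [e₀, e₁, onSites_mul, h₀₁₀, h₁₀₁, and_self]
  · rw [Ek_eq_onSites, Ek_eq_onSites]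
    exact (onSites_commute_of_disjoint (disjoint_range_window hi hj hij) _ _).eq
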